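/- arXiv:1610.07500 — 7 statements merged into one kernel-verified Lean document; each statement's English description precedes it below -/
import Mathlib

section
/- For all positive integers r, ℓ, s there exists a positive integer n = n(r,ℓ,s) such that for every coloring g of the interval [1,n] in r colors there exist positives integers a, b such that the set {a, a+b, a+2b, ..., a+(ℓ-1)b} ∪ {s·b} is contained in [1,n] and is monochromatic under g (i.e., g is constant on this set). -/
/-!
By compactness (Rado's selection principle) it suffices to find, for every coloring of all of `ℕ`,
some monochromatic `{a, a + b, …, a + (l - 1) b, s b}`; we induct on the number of colors.
Given a bound `T` that works for `r` colors and an `(r + 1)`-coloring `g`, van der Waerden gives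
a monochromatic (color `c`) set `d (1 + k j) + e` for `k < l`, `j ∈ T`. If some `s d j` with
`j ∈ T` also has color `c`, then `a = d + e`, `b = d j` works. Otherwise `j ↦ g (s d j)` avoids
`c` on `T`, so it is an `r`-coloring there, and a configuration `{a, …, s b} ⊆ T` it makes
monochromatic scales by `s d` to one for `g`, because `s (s d b) = s d (s b)`.
-/

open Finset

theorem Finset.exists_forall_exists_mono_subset {α κ : Type*} [Finite κ] (F : Set (Finset α))
    (h : ∀ g : α → κ, ∃ S ∈ F, ∃ c, ∀ x ∈ S, g x = c) :
    ∃ T : Finset α, ∀ g : α → κ, ∃ S ∈ F, S ⊆ T ∧ ∃ c, ∀ x ∈ S, g x = c := by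
  by_contra! hbad
  choose G hG using hbad
  obtain ⟨χ, hχ⟩ := Finset.rado_selection G
  obtain ⟨S, hSF, c, hc⟩ := h χ
  obtain ⟨T, hST, hagree⟩ := hχ S
  obtain ⟨x, hxS, hx⟩ := hG T S hSF hST c
  exact hx (by rw [← hagree x hxS, hc x hxS])

def brauerSet (l s a b : ℕ) : Finset ℕ :=
  insert (s * b) ((range l).image fun i => a + i * b)

def brauerSets (l s : ℕ) : Set (Finset ℕ) :=
  {S | ∃ a b, 0 < a ∧ 0 < b ∧ brauerSet l s a b = S}

section BrauerSet

variable {l s a b x : ℕ}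

theorem mem_brauerSet : x ∈ brauerSet l s a b ↔ x = s * b ∨ ∃ i < l, a + i * b = x := by
  simp [brauerSet]

theorem pos_of_mem_brauerSet (hs : 0 < s) (ha : 0 < a) (hb : 0 < b)
    (hx : x ∈ brauerSet l s a b) : 0 < x := by
  rcases mem_brauerSet.1 hx with rfl | ⟨i, -, rfl⟩
  · positivity
  · omega

theorem brauerSet_mul (m : ℕ) :
    brauerSet l s (m * a) (m * b) = (brauerSet l s a b).image (m * ·) := by
  ext x
  simp only [mem_brauerSet, mem_image]
  constructor
  · rintro (rfl | ⟨i, hi, rfl⟩)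
    · exact ⟨s * b, .inl rfl, by ring⟩
    · exact ⟨a + i * b, .inr ⟨i, hi, rfl⟩, by ring⟩
  · rintro ⟨y, rfl | ⟨i, hi, rfl⟩, rfl⟩
    · exact .inl (by ring)
    · exact .inr ⟨i, hi, by ring⟩

end BrauerSet

section Induction

variable {l s : ℕ}

theorem exists_mono_brauerSet_succ (hs : 0 < s) {r : ℕ} {T : Finset ℕ}
    (hT : ∀ h : ℕ → Fin (r + 1),
      ∃ S ∈ brauerSets l s, S ⊆ T ∧ ∃ c, ∀ x ∈ S, h x = c)
    (g : ℕ → Fin (r + 2)) : ∃ S ∈ brauerSets l s, ∃ c, ∀ x ∈ S, g x = c := by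
  obtain ⟨d, hd, e, c, hc⟩ := Combinatorics.exists_mono_homothetic_copy
    ((range l ×ˢ T).image fun p => 1 + p.1 * p.2) g
  simp only [mem_image, mem_product, mem_range, smul_eq_mul, forall_exists_index, and_imp,
    Prod.forall] at hc
  by_cases hcase : ∃ j ∈ T, 0 < j ∧ g (s * (d * j)) = c
  · obtain ⟨j, hjT, hj, hjc⟩ := hcase
    refine ⟨_, ⟨d + e, d * j, by omega, by positivity, rfl⟩, c, fun x hx => ?_⟩
    rcases mem_brauerSet.1 hx with rfl | ⟨k, hk, rfl⟩
    · exact hjc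
    · rw [show d + e + k * (d * j) = d * (1 + k * j) + e by ring]
      exact hc _ k j hk hjT rfl
  · push Not at hcase
    let h : ℕ → Fin (r + 1) := fun j => Function.invFun c.succAbove (g (s * d * j))
    obtain ⟨_, ⟨a, b, ha, hb, rfl⟩, hST, c', hc'⟩ := hT h
    refine ⟨_, ⟨s * d * a, s * d * b, by positivity, by positivity, rfl⟩,
      c.succAbove c', ?_⟩
    rw [brauerSet_mul, forall_mem_image]
    intro j hj
    have hne : g (s * d * j) ≠ c := by
      rw [mul_assoc]
      exact hcase j (hST hj) (pos_of_mem_brauerSet hs ha hb hj)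
    rw [← hc' j hj]
    exact (Function.invFun_eq (Fin.exists_succAbove_eq hne)).symm

theorem exists_mono_brauerSet (hs : 0 < s) (r : ℕ) (g : ℕ → Fin (r + 1)) :
    ∃ S ∈ brauerSets l s, ∃ c, ∀ x ∈ S, g x = c := by
  induction r with
  | zero => exact ⟨_, ⟨1, 1, one_pos, one_pos, rfl⟩, 0, fun x _ => Fin.fin_one_eq_zero _⟩
  | succ r ih =>
    obtain ⟨T, hT⟩ := Finset.exists_forall_exists_mono_subset _ ih
    exact exists_mono_brauerSet_succ hs hT g

end Induction

theorem brauer_theorem_general (r l s : ℕ) (hr : 0 < r) (hs : 0 < s) :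
    ∃ n : ℕ, 0 < n ∧ ∀ g : ℕ → Fin r, ∃ a b : ℕ, 0 < a ∧ 0 < b ∧
      (∀ i < l, a + i * b ∈ Finset.Icc 1 n) ∧ s * b ∈ Finset.Icc 1 n ∧
      ∀ x ∈ insert (s * b) ((Finset.range l).image fun i => a + i * b),
        ∀ y ∈ insert (s * b) ((Finset.range l).image fun i => a + i * b),
          g x = g y := by
  obtain ⟨r, rfl⟩ := Nat.exists_eq_add_one.2 hr
  obtain ⟨T, hT⟩ :=
    Finset.exists_forall_exists_mono_subset _ (exists_mono_brauerSet (l := l) hs r)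
  refine ⟨T.sup id + 1, by omega, fun g => ?_⟩
  obtain ⟨_, ⟨a, b, ha, hb, rfl⟩, hST, c, hc⟩ := hT g
  have hIcc : ∀ x ∈ brauerSet l s a b, x ∈ Icc 1 (T.sup id + 1) := fun x hx =>
    mem_Icc.2 ⟨pos_of_mem_brauerSet hs ha hb hx, (le_sup (f := id) (hST hx)).trans (by omega)⟩
  refine ⟨a, b, ha, hb, fun i hi => hIcc _ (mem_brauerSet.2 (.inr ⟨i, hi, rfl⟩)),
    hIcc _ (mem_brauerSet.2 (.inl rfl)), fun x hx y hy => ?_⟩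
  rw [hc x hx, hc y hy]

/-- **Brauer's Theorem.** For all positive `r, l, s` there is `n` such that every
`r`-coloring of `[1, n]` admits `a, b > 0` with
`{a, a+b, ..., a+(l-1)b} ∪ {s*b} ⊆ [1, n]` monochromatic. -/
theorem brauer_theorem (r l s : ℕ) (hr : 0 < r) (hl : 0 < l) (hs : 0 < s) :
    ∃ n : ℕ, 0 < n ∧ ∀ g : ℕ → Fin r, ∃ a b : ℕ, 0 < a ∧ 0 < b ∧
      (∀ i < l, a + i * b ∈ Finset.Icc 1 n) ∧ s * b ∈ Finset.Icc 1 n ∧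
      ∀ x ∈ insert (s * b) ((Finset.range l).image fun i => a + i * b),
        ∀ y ∈ insert (s * b) ((Finset.range l).image fun i => a + i * b),
          g x = g y :=
  brauer_theorem_general r l s hr hs
end

section
/- (Hindman–Brauer Theorem) For every coloring c : ℕ → Fin 2 there exists an infinite apart set H ⊆ ℕ and positive integers a, b such that the set FS^{{a, a+b, a+2b, b}}(H) is monochromatic under c. -/
/-- `lam n` is the least exponent in the binary expansion of `n`
(the 2-adic valuation of `n`). -/
def lam (n : ℕ) : ℕ := padicValNat 2 n

/-- `mu n` is the greatest exponent in the binary expansion of `n`. -/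
def mu (n : ℕ) : ℕ := Nat.log 2 n

/-- A set `X` of positive integers is apart if for all `x < x'` in `X`,
`μ(x) < λ(x')`. -/
def ApartSet (X : Set ℕ) : Prop :=
  (∀ x ∈ X, 0 < x) ∧ ∀ x ∈ X, ∀ y ∈ X, x < y → mu x < lam y

/-- `FSeq j B` is the set of sums of `j` distinct elements of `B`. -/
def FSeq (j : ℕ) (B : Set ℕ) : Set ℕ :=
  {n | ∃ F : Finset ℕ, ↑F ⊆ B ∧ F.card = j ∧ ∑ x ∈ F, x = n}

/-- `FSin A B = ⋃ j ∈ A, FSeq j B`. -/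
def FSin (A B : Set ℕ) : Set ℕ := ⋃ j ∈ A, FSeq j B

/-- A set is monochromatic under a coloring `c` if `c` is constant on it. -/
def MonoChr {r : ℕ} (c : ℕ → Fin r) (S : Set ℕ) : Prop :=
  ∀ x ∈ S, ∀ y ∈ S, c x = c y

/-- The gaps of `n`: pairs of consecutive exponents in the binary expansion. -/
def gaps (n : ℕ) : Set (ℕ × ℕ) :=
  {p | n.testBit p.1 ∧ n.testBit p.2 ∧ p.1 < p.2 ∧
    ∀ t, p.1 < t → t < p.2 → ¬ n.testBit t}

/-- The gap `p` of `n` is short in `n` (w.r.t. `K` and approximation `Kapp`). -/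
def ShortGap (K : Set ℕ) (Kapp : ℕ → Set ℕ) (n : ℕ) (p : ℕ × ℕ) : Prop :=
  p ∈ gaps n ∧ ∃ x ≤ p.1, x ∈ K ∧ x ∉ Kapp p.2

/-- The gap `p` of `n` is very short in `n` (w.r.t. approximation `Kapp`). -/
def VeryShortGap (Kapp : ℕ → Set ℕ) (n : ℕ) (p : ℕ × ℕ) : Prop :=
  p ∈ gaps n ∧ ∃ x ≤ p.1, x ∈ Kapp (mu n) ∧ x ∉ Kapp p.2

/-- `SG K Kapp n` is the number of short gaps of `n`. -/
noncomputable def SG (K : Set ℕ) (Kapp : ℕ → Set ℕ) (n : ℕ) : ℕ :=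
  {p : ℕ × ℕ | ShortGap K Kapp n p}.ncard

/-- `VSG Kapp n` is the number of very short gaps of `n`. -/
noncomputable def VSG (Kapp : ℕ → Set ℕ) (n : ℕ) : ℕ :=
  {p : ℕ × ℕ | VeryShortGap Kapp n p}.ncard

/- ### Auxiliary lemmas for the proof -/

section HBAux

lemma hb_geom4_lt (n : ℕ) : ∑ t ∈ Finset.range n, 4^t < 4^n := by
  induction n with
  | zero => simp
  | succ n ih => rw [Finset.sum_range_succ, pow_succ]; omega

lemma hb_pow4_two (m : ℕ) : (4:ℕ)^m = 2^(2*m) := by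
  rw [show (4:ℕ) = 2^2 by norm_num, ← pow_mul]

/-- decomposition of a sum of distinct powers of 4 at position u -/
lemma hb_pow4_decomp (F : Finset ℕ) (u : ℕ) :
    ∃ L C : ℕ, L < 4^u ∧
      ∑ t ∈ F, 4^t = L + 4^u * ((if u ∈ F then 1 else 0) + 4 * C) := by
  classical
  refine ⟨∑ t ∈ F.filter (· < u), 4^t, ∑ t ∈ F.filter (u < ·), 4^(t - (u+1)), ?_, ?_⟩
  · calc ∑ t ∈ F.filter (· < u), 4^t ≤ ∑ t ∈ Finset.range u, 4^t := by
          apply Finset.sum_le_sum_of_subset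
          intro t ht
          simp only [Finset.mem_filter] at ht
          exact Finset.mem_range.mpr ht.2
       _ < 4^u := hb_geom4_lt u
  · have hsplit : F = F.filter (· < u) ∪ F.filter (· = u) ∪ F.filter (u < ·) := by
      ext t
      simp only [Finset.mem_union, Finset.mem_filter]
      constructor
      · intro ht; rcases lt_trichotomy t u with h|h|h
        · exact Or.inl (Or.inl ⟨ht, h⟩)
        · exact Or.inl (Or.inr ⟨ht, h⟩)
        · exact Or.inr ⟨ht, h⟩
      · rintro ((⟨h,_⟩|⟨h,_⟩)|⟨h,_⟩) <;> exact h
    have hd1 : Disjoint (F.filter (· < u) ∪ F.filter (· = u)) (F.filter (u < ·)) := by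
      simp only [Finset.disjoint_left, Finset.mem_union, Finset.mem_filter]
      rintro t (⟨_,h⟩|⟨_,h⟩) ⟨_,h'⟩ <;> omega
    have hd2 : Disjoint (F.filter (· < u)) (F.filter (· = u)) := by
      simp only [Finset.disjoint_left, Finset.mem_filter]
      rintro t ⟨_,h⟩ ⟨_,h'⟩; omega
    have h1 : ∑ t ∈ F.filter (· = u), (4:ℕ)^t = (if u ∈ F then 1 else 0) * 4^u := by
      by_cases hu : u ∈ F
      · rw [if_pos hu, one_mul]
        have : F.filter (· = u) = {u} := by
          ext t; simp only [Finset.mem_filter, Finset.mem_singleton]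
          constructor
          · rintro ⟨_, rfl⟩; rfl
          · rintro rfl; exact ⟨hu, rfl⟩
        rw [this, Finset.sum_singleton]
      · rw [if_neg hu, zero_mul]
        have : F.filter (· = u) = ∅ := by
          apply Finset.filter_eq_empty_iff.mpr
          rintro t ht rfl; exact hu ht
        rw [this, Finset.sum_empty]
    have h2 : ∑ t ∈ F.filter (u < ·), (4:ℕ)^t
        = 4^(u+1) * ∑ t ∈ F.filter (u < ·), 4^(t - (u+1)) := by
      rw [Finset.mul_sum]
      apply Finset.sum_congr rfl
      intro t ht
      simp only [Finset.mem_filter] at ht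
      rw [← pow_add]
      congr 1
      omega
    conv_lhs => rw [hsplit]
    rw [Finset.sum_union hd1, Finset.sum_union hd2, h1, h2]
    ring_nf

lemma hb_dig_sum_pow4 (F : Finset ℕ) (u : ℕ) :
    (∑ t ∈ F, 4^t) / 4^u % 4 = if u ∈ F then 1 else 0 := by
  obtain ⟨L, C, hL, hEq⟩ := hb_pow4_decomp F u
  rw [hEq, Nat.add_mul_div_left _ _ (pow_pos (by norm_num) u), Nat.div_eq_of_lt hL, zero_add,
    Nat.add_mul_mod_self_left]
  split <;> rfl

lemma hb_dig_add_ge_two (F F' : Finset ℕ) (u : ℕ) (hu : u ∈ F) (hu' : u ∈ F') :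
    2 ≤ ((∑ t ∈ F, 4^t) + ∑ t ∈ F', 4^t) / 4^u % 4 := by
  obtain ⟨L, C, hL, hEq⟩ := hb_pow4_decomp F u
  obtain ⟨L', C', hL', hEq'⟩ := hb_pow4_decomp F' u
  rw [if_pos hu] at hEq
  rw [if_pos hu'] at hEq'
  have h4 : (0:ℕ) < 4^u := pow_pos (by norm_num) u
  have hq : (L + L') / 4^u ≤ 1 := by
    have := (Nat.div_lt_iff_lt_mul h4).mpr (by omega : L + L' < 2 * 4^u)
    omega
  have : (∑ t ∈ F, 4^t) + ∑ t ∈ F', 4^t = (L + L') + 4^u * (2 + 4 * (C + C')) := by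
    rw [hEq, hEq']; ring
  rw [this, Nat.add_mul_div_left _ _ h4]
  generalize (L + L') / 4^u = q at hq ⊢
  omega

lemma hb_disjoint_of_pow4_sum (F F' G : Finset ℕ)
    (h : (∑ t ∈ F, 4^t) + ∑ t ∈ F', 4^t = ∑ t ∈ G, 4^t) : Disjoint F F' := by
  rw [Finset.disjoint_left]
  intro u huF huF'
  have h1 := hb_dig_add_ge_two F F' u huF huF'
  rw [h, hb_dig_sum_pow4] at h1
  split at h1 <;> omega

lemma hb_FS_rep {s : Stream' ℕ} {m : ℕ} (hm : m ∈ Hindman.FS s) :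
    ∀ k : ℕ, (∀ n, s.get n = 4^(n+k)) →
      ∃ F : Finset ℕ, F.Nonempty ∧ (∀ t ∈ F, k ≤ t) ∧ m = ∑ t ∈ F, 4^t := by
  induction hm with
  | head' a =>
    intro k hk
    refine ⟨{k}, Finset.singleton_nonempty k, by simp, ?_⟩
    rw [Finset.sum_singleton]
    have := hk 0
    simpa [Stream'.head] using this
  | tail' a m h ih =>
    intro k hk
    obtain ⟨F, hne, hb, hsum⟩ := ih (k+1) (fun n => by
      have := hk (n+1)
      simpa [Stream'.tail, Stream'.get, Nat.add_right_comm, Nat.add_assoc] using this)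
    exact ⟨F, hne, fun t ht => le_of_lt (Nat.lt_of_succ_le (hb t ht)), hsum⟩
  | cons' a m h ih =>
    intro k hk
    obtain ⟨F, hne, hb, hsum⟩ := ih (k+1) (fun n => by
      have := hk (n+1)
      simpa [Stream'.tail, Stream'.get, Nat.add_right_comm, Nat.add_assoc] using this)
    have hknF : k ∉ F := fun hkF => by have := hb k hkF; omega
    refine ⟨insert k F, Finset.insert_nonempty _ _, ?_, ?_⟩
    · intro t ht
      rcases Finset.mem_insert.mp ht with rfl | ht
      · exact le_refl _
      · exact le_of_lt (Nat.lt_of_succ_le (hb t ht))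
    · rw [Finset.sum_insert hknF, ← hsum]
      have := hk 0
      simp only [Stream'.head] at *
      rw [this]
      norm_num

lemma hb_sum_pow4_lt (G : Finset ℕ) (h : G.Nonempty) :
    ∑ t ∈ G, 4^t < 2 * 4^(G.max' h) := by
  have hsub : G ⊆ Finset.range (G.max' h + 1) := by
    intro t ht
    exact Finset.mem_range.mpr (Nat.lt_succ_of_le (Finset.le_max' G t ht))
  calc ∑ t ∈ G, 4^t ≤ ∑ t ∈ Finset.range (G.max' h + 1), 4^t :=
        Finset.sum_le_sum_of_subset hsub
    _ < 2 * 4^(G.max' h) := by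
        rw [Finset.sum_range_succ]
        have := hb_geom4_lt (G.max' h)
        omega

lemma hb_pow4_min_le_sum (G : Finset ℕ) (h : G.Nonempty) :
    4^(G.min' h) ≤ ∑ t ∈ G, 4^t :=
  Finset.single_le_sum (fun t _ => Nat.zero_le _) (G.min'_mem h)

lemma hb_mu_sum_le (G : Finset ℕ) (h : G.Nonempty) :
    mu (∑ t ∈ G, 4^t) ≤ 2 * G.max' h := by
  unfold mu
  have hne : ∑ t ∈ G, 4^t ≠ 0 := by
    have := hb_pow4_min_le_sum G h
    have := pow_pos (show (0:ℕ)<4 by norm_num) (G.min' h)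
    omega
  have hlt : ∑ t ∈ G, 4^t < 2^(2 * G.max' h + 1) := by
    rw [pow_succ', ← hb_pow4_two]
    exact hb_sum_pow4_lt G h
  have := Nat.log_lt_of_lt_pow hne hlt
  omega

lemma hb_le_lam_sum (G : Finset ℕ) (h : G.Nonempty) :
    2 * G.min' h ≤ lam (∑ t ∈ G, 4^t) := by
  unfold lam
  have hne : ∑ t ∈ G, 4^t ≠ 0 := by
    have := hb_pow4_min_le_sum G h
    have := pow_pos (show (0:ℕ)<4 by norm_num) (G.min' h)
    omega
  have hdvd : (2:ℕ)^(2 * G.min' h) ∣ ∑ t ∈ G, 4^t := by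
    rw [← hb_pow4_two]
    apply Finset.dvd_sum
    intro t ht
    exact pow_dvd_pow 4 (Finset.min'_le G t ht)
  rcases (padicValNat_dvd_iff (p := 2) (2 * G.min' h) (∑ t ∈ G, 4^t)).mp hdvd with h0 | hle
  · exact absurd h0 hne
  · exact hle

end HBAux

theorem hindman_brauer (c : ℕ → Fin 2) :
    ∃ H : Set ℕ, H.Infinite ∧ ApartSet H ∧ ∃ a b : ℕ, 0 < a ∧ 0 < b ∧
      MonoChr c (FSin {a, a + b, a + 2 * b, b} H) := by
  classical
  set A : Stream' ℕ := (fun n => 4^n : ℕ → ℕ) with hA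
  have hAget : ∀ n, A.get n = 4^(n+0) := fun n => by simp [hA, Stream'.get]
  obtain ⟨C, hCs, b, hbC⟩ := Hindman.FS_partition_regular A
    (Set.range (fun v : Fin 2 => c ⁻¹' {v} ∩ Hindman.FS A))
    (Set.finite_range _)
    (fun m hm => Set.mem_sUnion.mpr ⟨_, Set.mem_range_self (c m), rfl, hm⟩)
  obtain ⟨v, rfl⟩ := hCs
  have hcol : ∀ x ∈ Hindman.FS b, c x = v := fun x hx => (hbC hx).1
  have hsubA : ∀ x ∈ Hindman.FS b, x ∈ Hindman.FS A := fun x hx => (hbC hx).2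
  -- representation of b's entries
  have hrep : ∀ i : ℕ, ∃ F : Finset ℕ, F.Nonempty ∧ b.get i = ∑ t ∈ F, 4^t := by
    intro i
    obtain ⟨F, hne, -, hsum⟩ :=
      hb_FS_rep (hsubA _ (Hindman.FS.singleton b i)) 0 hAget
    exact ⟨F, hne, hsum⟩
  choose F hFne hFsum using hrep
  -- pairwise disjoint supports
  have hdisj : ∀ i j, i < j → Disjoint (F i) (F j) := by
    intro i j hij
    obtain ⟨G, -, -, hG⟩ :=
      hb_FS_rep (hsubA _ (Hindman.FS.add_two b i j hij)) 0 hAget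
    exact hb_disjoint_of_pow4_sum (F i) (F j) G (by rw [← hFsum i, ← hFsum j]; exact hG)
  -- infinitely many entries with support above any bound
  have key : ∀ m n : ℕ, ∃ i, n ≤ i ∧ ∀ t ∈ F i, m < t := by
    intro m n
    by_contra hcon
    push_neg at hcon
    have hcon' : ∀ i, n ≤ i → ∃ t, t ∈ F i ∧ t ≤ m := by
      intro i hi
      obtain ⟨t, ht1, ht2⟩ := hcon i hi
      exact ⟨t, ht1, ht2⟩
    set g : ℕ → ℕ := fun i => if hi : n ≤ i then (hcon' i hi).choose else 0 with hg
    have hgspec : ∀ i, n ≤ i → g i ∈ F i ∧ g i ≤ m := by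
      intro i hi
      simp only [hg, dif_pos hi]
      exact (hcon' i hi).choose_spec
    obtain ⟨x, hx, y, hy, hxy, hfxy⟩ :=
      Finset.exists_ne_map_eq_of_card_lt_of_maps_to
        (s := Finset.Ico n (n+(m+2))) (t := Finset.range (m+1)) (f := g)
        (by rw [Nat.card_Ico, Finset.card_range]; omega)
        (by intro i hi
            rw [Finset.mem_coe, Finset.mem_Ico] at hi
            exact Finset.mem_coe.mpr <| Finset.mem_range.mpr (Nat.lt_succ_of_le (hgspec i hi.1).2))
    rw [Finset.mem_Ico] at hx hy
    rcases hxy.lt_or_gt with h | h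
    · exact (Finset.disjoint_left.mp (hdisj x y h)) (hgspec x hx.1).1
        (hfxy ▸ (hgspec y hy.1).1)
    · exact (Finset.disjoint_left.mp (hdisj y x h)) (hgspec y hy.1).1
        (hfxy ▸ (hgspec x hx.1).1)
  -- the extracted index sequence
  set idx : ℕ → ℕ := fun k => Nat.rec ((key 0 0).choose)
    (fun _ prev => (key ((F prev).max' (hFne prev)) (prev+1)).choose) k with hidxdef
  have histep : ∀ k, idx k < idx (k+1) ∧
      ∀ t ∈ F (idx (k+1)), (F (idx k)).max' (hFne _) < t := by
    intro k
    have hspec := (key ((F (idx k)).max' (hFne _)) (idx k + 1)).choose_spec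
    exact ⟨Nat.lt_of_succ_le hspec.1, hspec.2⟩
  have hidxmono : StrictMono idx := strictMono_nat_of_lt_succ (fun k => (histep k).1)
  -- max/min separation
  have hchain : ∀ k d, (F (idx k)).max' (hFne _) < (F (idx (k+d+1))).min' (hFne _) := by
    intro k d
    induction d with
    | zero => exact (histep k).2 _ (Finset.min'_mem _ _)
    | succ d ih =>
      have h1 : (F (idx (k+d+1))).min' (hFne _) ≤ (F (idx (k+d+1))).max' (hFne _) :=
        Finset.le_max' _ _ (Finset.min'_mem _ _)
      have h2 := (histep (k+d+1)).2 _ (Finset.min'_mem (F (idx (k+d+2))) (hFne _))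
      have : k + (d+1) + 1 = k + d + 2 := by omega
      rw [this]
      omega
  have hsepmm : ∀ k l, k < l → (F (idx k)).max' (hFne _) < (F (idx l)).min' (hFne _) := by
    intro k l hkl
    obtain ⟨d, rfl⟩ := Nat.exists_eq_add_of_lt hkl
    exact hchain k d
  set h : ℕ → ℕ := fun k => b.get (idx k) with hh
  have hval : ∀ k, h k = ∑ t ∈ F (idx k), 4^t := fun k => hFsum (idx k)
  have hpos : ∀ k, 0 < h k := by
    intro k
    rw [hval k]
    have := hb_pow4_min_le_sum (F (idx k)) (hFne _)
    have := pow_pos (show (0:ℕ)<4 by norm_num) ((F (idx k)).min' (hFne _))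
    omega
  have hmono : StrictMono h := by
    apply strictMono_nat_of_lt_succ
    intro k
    rw [hval k, hval (k+1)]
    calc ∑ t ∈ F (idx k), 4^t < 2 * 4^((F (idx k)).max' (hFne _)) :=
          hb_sum_pow4_lt _ _
      _ ≤ 4^((F (idx k)).max' (hFne _) + 1) := by rw [pow_succ]; omega
      _ ≤ 4^((F (idx (k+1))).min' (hFne _)) := by
          apply Nat.pow_le_pow_right (by norm_num)
          have := hsepmm k (k+1) (Nat.lt_succ_self k)
          omega
      _ ≤ ∑ t ∈ F (idx (k+1)), 4^t := hb_pow4_min_le_sum _ _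
  have hsep : ∀ k l, k < l → mu (h k) < lam (h l) := by
    intro k l hkl
    have h1 : mu (h k) ≤ 2 * (F (idx k)).max' (hFne _) := by
      rw [hval k]; exact hb_mu_sum_le _ _
    have h2 : 2 * (F (idx l)).min' (hFne _) ≤ lam (h l) := by
      rw [hval l]; exact hb_le_lam_sum _ _
    have := hsepmm k l hkl
    omega
  -- membership in FS b for sums of distinct h's
  have hFS : ∀ (Fx : Finset ℕ), Fx.Nonempty → ↑Fx ⊆ Set.range h →
      ∑ x ∈ Fx, x ∈ Hindman.FS b := by
    intro Fx hFxne hFxH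
    set g : ℕ → ℕ := fun x => if hx : ∃ k, h k = x then hx.choose else 0 with hgd
    have hg : ∀ x ∈ Fx, h (g x) = x := by
      intro x hx
      obtain ⟨k, hk⟩ := hFxH hx
      have hex : ∃ k, h k = x := ⟨k, hk⟩
      simp only [hgd, dif_pos hex]
      exact hex.choose_spec
    have hginj : ∀ x ∈ Fx, ∀ y ∈ Fx, g x = g y → x = y := by
      intro x hx y hy hxy
      rw [← hg x hx, ← hg y hy, hxy]
    have hs1 : ∑ k ∈ Fx.image g, h k = ∑ x ∈ Fx, x := by
      rw [Finset.sum_image hginj]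
      exact Finset.sum_congr rfl hg
    have hs2 : ∑ k ∈ Fx.image g, h k = ∑ j ∈ (Fx.image g).image idx, b.get j := by
      rw [Finset.sum_image (fun x _ y _ hxy => hidxmono.injective hxy)]
    have hne : ((Fx.image g).image idx).Nonempty := (hFxne.image g).image idx
    have := Hindman.FS.finset_sum b _ hne
    rw [← hs2, hs1] at this
    exact this
  refine ⟨Set.range h, Set.infinite_range_of_injective hmono.injective, ⟨?_, ?_⟩,
    1, 1, one_pos, one_pos, ?_⟩
  · rintro x ⟨k, rfl⟩
    exact hpos k
  · rintro x ⟨k, rfl⟩ y ⟨l, rfl⟩ hxy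
    exact hsep k l (hmono.lt_iff_lt.mp hxy)
  · have hmem : ∀ x ∈ FSin {1, 1 + 1, 1 + 2 * 1, 1} (Set.range h), x ∈ Hindman.FS b := by
      intro x hx
      simp only [FSin, Set.mem_iUnion] at hx
      obtain ⟨j, hj, hx⟩ := hx
      obtain ⟨Fx, hFxH, hcard, hsum⟩ := hx
      have hj0 : j ≠ 0 := by
        simp only [Set.mem_insert_iff, Set.mem_singleton_iff] at hj
        rcases hj with rfl|rfl|rfl|rfl <;> norm_num
      have hFxne : Fx.Nonempty := Finset.card_pos.mp (by omega)
      rw [← hsum]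
      exact hFS Fx hFxne hFxH
    intro x hx y hy
    rw [hcol x (hmem x hx), hcol y (hmem y hy)]
end

section
/- (Brauer family) For all positive integers r and ℓ and every coloring c : ℕ → Fin r there exists an infinite apart set H ⊆ ℕ and positive integers a, b such that the set FS^{{a, a+b, a+2b, ..., a+(ℓ-1)b} ∪ {b}}(H) is monochromatic under c. -/
lemma fs_pos' : ∀ {a : Stream' ℕ} {m : ℕ}, m ∈ Hindman.FS a → (∀ i, 0 < a.get i) → 0 < m := by
  intro a m hm
  induction hm with
  | head' a => exact fun h => h 0
  | tail' a m h ih => exact fun hp => ih fun i => hp (i + 1)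
  | cons' a m h ih => exact fun hp => Nat.add_pos_left (hp 0) m

lemma exists_block (b : Stream' ℕ) (hb : ∀ i, 0 < b.get i) (n m : ℕ) :
    ∃ p q : ℕ, n ≤ p ∧ p < q ∧ 0 < ∑ i ∈ Finset.Ico p q, b.get i ∧
      2 ^ m ∣ ∑ i ∈ Finset.Ico p q, b.get i := by
  have h2 : 0 < 2 ^ m := Nat.two_pow_pos m
  set S : ℕ → ℕ := fun k => ∑ i ∈ Finset.Ico n (n + k), b.get i with hS
  have key : ∀ u v : ℕ, u < v → S u % 2 ^ m = S v % 2 ^ m →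
      ∃ p q : ℕ, n ≤ p ∧ p < q ∧ 0 < ∑ i ∈ Finset.Ico p q, b.get i ∧
        2 ^ m ∣ ∑ i ∈ Finset.Ico p q, b.get i := by
    intro u v huv heq
    have hsplit : S u + ∑ i ∈ Finset.Ico (n + u) (n + v), b.get i = S v :=
      Finset.sum_Ico_consecutive _ (by omega) (by omega)
    have hle : S u ≤ S v := by omega
    have hdvd : 2 ^ m ∣ S v - S u := (Nat.modEq_iff_dvd' hle).mp heq
    have hval : S v - S u = ∑ i ∈ Finset.Ico (n + u) (n + v), b.get i := by omega
    refine ⟨n + u, n + v, by omega, by omega, ?_, hval ▸ hdvd⟩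
    exact Finset.sum_pos (fun i _ => hb i) (Finset.nonempty_Ico.mpr (by omega))
  obtain ⟨x, y, hne, hfeq⟩ := Fintype.exists_ne_map_eq_of_card_lt
    (fun k : Fin (2 ^ m + 1) => (⟨S k % 2 ^ m, Nat.mod_lt _ h2⟩ : Fin (2 ^ m)))
    (by simp)
  have hfeq' : S x % 2 ^ m = S y % 2 ^ m := by
    simpa using congrArg Fin.val hfeq
  rcases (Fin.val_ne_of_ne hne).lt_or_gt with h | h
  · exact key x y h hfeq'
  · exact key y x h hfeq'.symm

theorem brauer_family (r l : ℕ) (hr : 0 < r) (hl : 0 < l) (c : ℕ → Fin r) :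
    ∃ H : Set ℕ, H.Infinite ∧ ApartSet H ∧ ∃ a b : ℕ, 0 < a ∧ 0 < b ∧
      MonoChr c (FSin (insert b ((fun i : ℕ => a + i * b) '' Set.Iio l)) H) := by
  classical
  -- Hindman's theorem applied to powers of two / positivity-refined color classes
  have ha0 : ∀ i, 0 < Stream'.get (fun n => 2 ^ n : Stream' ℕ) i := fun i =>
    Nat.two_pow_pos i
  obtain ⟨cls, hcls, b, hFSb⟩ := Hindman.FS_partition_regular (fun n => 2 ^ n)
    ((fun i : Fin r => {n : ℕ | 0 < n ∧ c n = i}) '' Set.univ)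
    (Set.finite_univ.image _)
    (fun m hm => ⟨{n | 0 < n ∧ c n = c m}, ⟨c m, trivial, rfl⟩, fs_pos' hm ha0, rfl⟩)
  obtain ⟨i0, -, rfl⟩ := hcls
  have hb : ∀ i, 0 < b.get i := fun i => (hFSb (Hindman.FS.singleton b i)).1
  -- choose blocks
  choose p q hnp hpq hpos hdvd using exists_block b hb
  set g : ℕ → ℕ × ℕ := fun k => Nat.rec (p 0 0, q 0 0)
    (fun _ pq => (p pq.2 (mu (∑ i ∈ Finset.Ico pq.1 pq.2, b.get i) + 1),
                  q pq.2 (mu (∑ i ∈ Finset.Ico pq.1 pq.2, b.get i) + 1))) k with hg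
  set x : ℕ → ℕ := fun k => ∑ i ∈ Finset.Ico (g k).1 (g k).2, b.get i with hxdef
  have hg1 : ∀ k, (g k).1 < (g k).2 := by intro k; cases k <;> exact hpq _ _
  have hg2 : ∀ k, (g k).2 ≤ (g (k + 1)).1 := fun k => hnp _ _
  have hxpos : ∀ k, 0 < x k := by intro k; cases k <;> exact hpos _ _
  have hxdvd : ∀ k, 2 ^ (mu (x k) + 1) ∣ x (k + 1) := fun k => hdvd _ _
  have hxne : ∀ k, x k ≠ 0 := fun k => (hxpos k).ne'
  have hsep0 : ∀ k d, (g k).2 ≤ (g (k + 1 + d)).1 := by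
    intro k d
    induction d with
    | zero => exact hg2 k
    | succ d ih => exact le_trans ih (le_trans (hg1 (k + 1 + d)).le (hg2 (k + 1 + d)))
  have hsep : ∀ j k, j < k → (g j).2 ≤ (g k).1 := by
    intro j k hjk
    obtain ⟨d, rfl⟩ : ∃ d, k = j + 1 + d := ⟨k - (j + 1), by omega⟩
    exact hsep0 j d
  -- lam/mu facts
  have hlam1 : ∀ k, mu (x k) + 1 ≤ lam (x (k + 1)) := by
    intro k
    have := (padicValNat_dvd_iff (mu (x k) + 1) (x (k + 1))).mp (hxdvd k)
    rcases this with h | h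
    · exact absurd h (hxne (k + 1))
    · exact h
  have hlammu : ∀ n : ℕ, n ≠ 0 → lam n ≤ mu n := by
    intro n hn
    have h1 : 2 ^ lam n ∣ n := pow_padicValNat_dvd
    have h2 : 2 ^ lam n ≤ n := Nat.le_of_dvd (Nat.pos_of_ne_zero hn) h1
    exact (Nat.le_log_iff_pow_le one_lt_two hn).mpr h2
  have hap : ∀ j k, j < k → mu (x j) < lam (x k) := by
    intro j k hjk
    obtain ⟨d, rfl⟩ : ∃ d, k = j + 1 + d := ⟨k - (j + 1), by omega⟩
    clear hjk
    induction d with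
    | zero => exact hlam1 j
    | succ d ih =>
      have h1 : lam (x (j + 1 + d)) ≤ mu (x (j + 1 + d)) := hlammu _ (hxne _)
      have h2 : mu (x (j + 1 + d)) + 1 ≤ lam (x (j + 1 + d + 1)) := hlam1 _
      have : j + 1 + (d + 1) = (j + 1 + d) + 1 := by omega
      rw [this]
      omega
  have hxmono : ∀ j k, j < k → x j < x k := by
    intro j k hjk
    have h1 : x j < 2 ^ (mu (x j) + 1) := Nat.lt_pow_succ_log_self one_lt_two _
    have h2 : (2 : ℕ) ^ (mu (x j) + 1) ≤ 2 ^ lam (x k) :=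
      Nat.pow_le_pow_right (by norm_num) (hap j k hjk)
    have h3 : 2 ^ lam (x k) ≤ x k := Nat.le_of_dvd (hxpos k) pow_padicValNat_dvd
    omega
  have hinj : Function.Injective x := by
    intro j k hjk
    by_contra hne
    rcases Nat.lt_or_ge j k with h | h
    · exact absurd hjk (hxmono j k h).ne
    · exact absurd hjk.symm (hxmono k j (by omega)).ne
  -- sums of distinct elements of range x are in FS b
  have hsum : ∀ F : Finset ℕ, ↑F ⊆ Set.range x → F.Nonempty → ∑ v ∈ F, v ∈ Hindman.FS b := by
    intro F hF hFne
    set K : Finset ℕ := F.image (Function.invFun x) with hK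
    have hinvF : ∀ v ∈ F, x (Function.invFun x v) = v := fun v hv =>
      Function.invFun_eq (hF hv)
    have hinjF : ∀ u ∈ F, ∀ v ∈ F, Function.invFun x u = Function.invFun x v → u = v := by
      intro u hu v hv h
      rw [← hinvF u hu, ← hinvF v hv, h]
    have hsum1 : ∑ v ∈ F, v = ∑ k ∈ K, x k := by
      rw [hK, Finset.sum_image hinjF]
      exact (Finset.sum_congr rfl fun v hv => (hinvF v hv).symm)
    have hdisj : (↑K : Set ℕ).PairwiseDisjoint (fun k => Finset.Ico (g k).1 (g k).2) := by
      intro u _ v _ huv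
      have : ∀ j k, j < k →
          Disjoint (Finset.Ico (g j).1 (g j).2) (Finset.Ico (g k).1 (g k).2) := by
        intro j k hjk
        apply Finset.disjoint_left.mpr
        intro i hi hi'
        rw [Finset.mem_Ico] at hi hi'
        have := hsep j k hjk
        omega
      rcases Nat.lt_or_ge u v with h | h
      · exact this u v h
      · exact (this v u (by omega)).symm
    have hsum2 : ∑ k ∈ K, x k = ∑ i ∈ K.biUnion (fun k => Finset.Ico (g k).1 (g k).2), b.get i :=
      (Finset.sum_biUnion hdisj).symm
    have hKne : K.Nonempty := hFne.image _
    obtain ⟨k0, hk0⟩ := hKne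
    have hbne : (K.biUnion (fun k => Finset.Ico (g k).1 (g k).2)).Nonempty :=
      ⟨(g k0).1, Finset.mem_biUnion.mpr ⟨k0, hk0, Finset.mem_Ico.mpr ⟨le_refl _, hg1 k0⟩⟩⟩
    rw [hsum1, hsum2]
    exact Hindman.FS.finset_sum b _ hbne
  refine ⟨Set.range x, Set.infinite_range_of_injective hinj, ⟨?_, ?_⟩, 1, 1, one_pos, one_pos, ?_⟩
  · rintro v ⟨k, rfl⟩; exact hxpos k
  · rintro v ⟨j, rfl⟩ w ⟨k, rfl⟩ hvw
    rcases Nat.lt_or_ge j k with h | h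
    · exact hap j k h
    · rcases Nat.eq_or_lt_of_le h with h' | h'
      · subst h'; exact absurd hvw (lt_irrefl _)
      · exact absurd hvw (not_lt.mpr (hxmono k j h').le)
  · have hmem : ∀ w ∈ FSin (insert 1 ((fun i : ℕ => 1 + i * 1) '' Set.Iio l)) (Set.range x),
        c w = i0 := by
      intro w hw
      rw [FSin, Set.mem_iUnion₂] at hw
      obtain ⟨j, hj, hw⟩ := hw
      have hjpos : 0 < j := by
        rcases hj with h | ⟨i, -, h⟩
        · omega
        · simp only at h
          omega
      obtain ⟨F, hF, hcard, rfl⟩ := hw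
      have hFne : F.Nonempty := Finset.card_pos.mp (hcard ▸ hjpos)
      exact (hFSb (hsum F hF hFne)).2
    intro u hu v hv
    rw [hmem u hu, hmem v hv]
end

section
/- For every positive integer r, every coloring c : ℕ → Fin r, every positive integer n, and every infinite apart set H₀ ⊆ ℕ, there exists an infinite apart set H ⊆ H₀ such that for every i with 1 ≤ i ≤ n the set FS^{=i}(H) is monochromatic under c. -/
/-!
Colour each finite set `F ⊆ H₀` by `c (∑ F)`. The infinite Ramsey theorem, applied successively
for the sizes `i = 1, …, n`, each time inside the infinite set obtained at the previous step,
yields an infinite `H ⊆ H₀` on whose `i`-element subsets this colour is constant for every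
`i ≤ n`; that is exactly the monochromaticity of `FS^{=i}(H)`. Apartness passes to subsets.

Ramsey's theorem itself is proved by induction on the size `k + 1`: repeatedly take the least
element `a m` of the current infinite set and shrink the rest so that the colour of
`insert (a m) F` depends only on `m`; a colour taken by infinitely many `m` selects the
homogeneous set.
-/

theorem ApartSet.mono {X Y : Set ℕ} (hX : ApartSet X) (hYX : Y ⊆ X) : ApartSet Y :=
  ⟨fun x hx => hX.1 x (hYX hx), fun x hx y hy => hX.2 x (hYX hx) y (hYX hy)⟩

theorem Set.Infinite.sep_lt {S : Set ℕ} (hS : S.Infinite) (a : ℕ) :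
    {x ∈ S | a < x}.Infinite :=
  (hS.sdiff (Set.finite_Iic a)).mono fun x hx => ⟨hx.1, by simpa using hx.2⟩

section Ramsey

variable {α : Type*}

def IsHomogeneous (f : Finset ℕ → α) (k : ℕ) (T : Set ℕ) : Prop :=
  ∃ a, ∀ F : Finset ℕ, ↑F ⊆ T → F.card = k → f F = a

theorem IsHomogeneous.mono {f : Finset ℕ → α} {k : ℕ} {T T' : Set ℕ}
    (h : IsHomogeneous f k T) (hT : T' ⊆ T) : IsHomogeneous f k T' :=
  let ⟨a, ha⟩ := h
  ⟨a, fun F hF => ha F (hF.trans hT)⟩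

theorem isHomogeneous_zero (f : Finset ℕ → α) (T : Set ℕ) : IsHomogeneous f 0 T :=
  ⟨f ∅, fun F _ hF => by rw [Finset.card_eq_zero.mp hF]⟩

theorem Set.Infinite.exists_strictMono_insert_isHomogeneous {k : ℕ} {f : Finset ℕ → α}
    (hk : ∀ (g : Finset ℕ → α) {S : Set ℕ}, S.Infinite →
      ∃ T ⊆ S, T.Infinite ∧ IsHomogeneous g k T)
    {S : Set ℕ} (hS : S.Infinite) :
    ∃ a : ℕ → ℕ, StrictMono a ∧ Set.range a ⊆ S ∧
      ∀ m, IsHomogeneous (fun F => f (insert (a m) F)) k (a '' Set.Ioi m) := by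
  choose! next hnext_sub hnext_inf hnext_hom using
    fun S (hS : S.Infinite) => hk (fun F => f (insert (sInf S) F)) (hS.sep_lt (sInf S))
  set g : ℕ → Set ℕ := fun n => next^[n] S
  have hg_succ : ∀ n, g (n + 1) = next (g n) := fun n => Function.iterate_succ_apply' _ _ _
  have hg_inf : ∀ n, (g n).Infinite := by
    intro n
    induction n with
    | zero => exact hS
    | succ n ih => rw [hg_succ]; exact hnext_inf _ ih
  have hg_sub : ∀ n, g (n + 1) ⊆ {x ∈ g n | sInf (g n) < x} := fun n => by
    rw [hg_succ]; exact hnext_sub _ (hg_inf n)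
  have hg_anti : Antitone g :=
    antitone_nat_of_succ_le fun n => (hg_sub n).trans (Set.sep_subset _ _)
  have hmem : ∀ n, sInf (g n) ∈ g n := fun n => Nat.sInf_mem (hg_inf n).nonempty
  refine ⟨fun n => sInf (g n), strictMono_nat_of_lt_succ fun n => (hg_sub n (hmem (n + 1))).2,
    ?_, fun m => (hnext_hom _ (hg_inf m)).mono ?_⟩
  · rintro _ ⟨n, rfl⟩
    exact hg_anti (Nat.zero_le n) (hmem n)
  · rintro _ ⟨n, hmn, rfl⟩
    rw [← hg_succ]
    exact hg_anti (Nat.succ_le_of_lt hmn) (hmem n)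

theorem exists_isHomogeneous_succ_of_strictMono [Finite α] {k : ℕ} {f : Finset ℕ → α}
    {a : ℕ → ℕ} (ha : StrictMono a)
    (hhom : ∀ m, IsHomogeneous (fun F => f (insert (a m) F)) k (a '' Set.Ioi m)) :
    ∃ T ⊆ Set.range a, T.Infinite ∧ IsHomogeneous f (k + 1) T := by
  choose col hcol using hhom
  obtain ⟨C, hC⟩ := Finite.exists_infinite_fiber col
  refine ⟨a '' (col ⁻¹' {C}), Set.image_subset_range _ _,
    (Set.infinite_coe_iff.mp hC).image ha.injective.injOn, C, fun F hF hcard => ?_⟩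
  have hne : F.Nonempty := Finset.card_pos.mp (by omega)
  obtain ⟨m, hmC, hm⟩ := hF (F.min'_mem hne)
  have hmF : a m ∈ F := hm ▸ F.min'_mem hne
  have hmin : ∀ x ∈ F, a m ≤ x := fun x hx => hm ▸ F.min'_le x hx
  have hrest : ↑(F.erase (a m)) ⊆ a '' Set.Ioi m := by
    intro x hx
    obtain ⟨hxm, hxF⟩ := Finset.mem_erase.mp hx
    obtain ⟨n, -, rfl⟩ := hF hxF
    exact ⟨n, ha.lt_iff_lt.mp (lt_of_le_of_ne (hmin _ hxF) (Ne.symm hxm)), rfl⟩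
  have h : f (insert (a m) (F.erase (a m))) = col m :=
    hcol m _ hrest (by rw [Finset.card_erase_of_mem hmF, hcard]; rfl)
  rwa [Finset.insert_erase hmF, show col m = C from hmC] at h

theorem Set.Infinite.exists_isHomogeneous [Finite α] (k : ℕ) (f : Finset ℕ → α) {S : Set ℕ}
    (hS : S.Infinite) : ∃ T ⊆ S, T.Infinite ∧ IsHomogeneous f k T := by
  induction k generalizing f S with
  | zero => exact ⟨S, subset_rfl, hS, isHomogeneous_zero f S⟩
  | succ k ih =>
    obtain ⟨a, ha, haS, hhom⟩ := hS.exists_strictMono_insert_isHomogeneous (f := f) ih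
    obtain ⟨T, hTa, hT, hTf⟩ := exists_isHomogeneous_succ_of_strictMono ha hhom
    exact ⟨T, hTa.trans haS, hT, hTf⟩

theorem Set.Infinite.exists_forall_mem_isHomogeneous [Finite α] (K : Finset ℕ)
    (f : Finset ℕ → α) {S : Set ℕ} (hS : S.Infinite) :
    ∃ T ⊆ S, T.Infinite ∧ ∀ k ∈ K, IsHomogeneous f k T := by
  induction K using Finset.induction_on with
  | empty => exact ⟨S, subset_rfl, hS, by simp⟩
  | insert k K _ ih =>
    obtain ⟨T, hTS, hT, hTK⟩ := ih
    obtain ⟨T', hT'T, hT', hT'k⟩ := hT.exists_isHomogeneous k f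
    exact ⟨T', hT'T.trans hTS, hT', Finset.forall_mem_insert _ _ _ |>.mpr
      ⟨hT'k, fun j hj => (hTK j hj).mono hT'T⟩⟩

end Ramsey

theorem monoChr_FSeq_of_isHomogeneous {r j : ℕ} {c : ℕ → Fin r} {B : Set ℕ}
    (h : IsHomogeneous (fun F => c (∑ x ∈ F, x)) j B) : MonoChr c (FSeq j B) := by
  obtain ⟨a, ha⟩ := h
  rintro _ ⟨F, hF, hFj, rfl⟩ _ ⟨G, hG, hGj, rfl⟩
  exact (ha F hF hFj).trans (ha G hG hGj).symm

theorem iterated_ramsey_step_general (r : ℕ) (c : ℕ → Fin r)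
    (n : ℕ) (H₀ : Set ℕ) (h₀inf : H₀.Infinite) (h₀ap : ApartSet H₀) :
    ∃ H : Set ℕ, H ⊆ H₀ ∧ H.Infinite ∧ ApartSet H ∧
      ∀ i, 1 ≤ i → i ≤ n → MonoChr c (FSeq i H) := by
  obtain ⟨H, hH, hinf, hhom⟩ :=
    h₀inf.exists_forall_mem_isHomogeneous (Finset.Icc 1 n) fun F => c (∑ x ∈ F, x)
  exact ⟨H, hH, hinf, h₀ap.mono hH, fun i h1 h2 =>
    monoChr_FSeq_of_isHomogeneous (hhom i (Finset.mem_Icc.mpr ⟨h1, h2⟩))⟩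

theorem iterated_ramsey_step (r : ℕ) (hr : 0 < r) (c : ℕ → Fin r)
    (n : ℕ) (hn : 0 < n) (H₀ : Set ℕ) (h₀inf : H₀.Infinite) (h₀ap : ApartSet H₀) :
    ∃ H : Set ℕ, H ⊆ H₀ ∧ H.Infinite ∧ ApartSet H ∧
      ∀ i, 1 ≤ i → i ≤ n → MonoChr c (FSeq i H) :=
  iterated_ramsey_step_general r c n H₀ h₀inf h₀ap
end

section
/- Let K ⊆ ℕ and let K[·] be an approximation of K (K[s] ⊆ K[s+1] for all s and K = ⋃_s K[s]). Let m, n be positive integers such that: (1) μ(m) < λ(n); (2) for all x ≤ μ(m), x ∈ K if and only if x ∈ K[λ(n)]; (3) μ(m+n) = μ(n). Then VSG(m+n) = SG(m) + VSG(n). -/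
lemma lam_le_of_testBit {n i : ℕ} (h : n.testBit i = true) : lam n ≤ i := by
  by_contra hlt
  push_neg at hlt
  have hdvd : 2 ^ (i + 1) ∣ n := dvd_trans (pow_dvd_pow 2 hlt) pow_padicValNat_dvd
  obtain ⟨k, hk⟩ := hdvd
  rw [Nat.testBit_eq_decide_div_mod_eq] at h
  have h2 : n / 2 ^ i = 2 * k :=
    Nat.div_eq_of_eq_mul_left (pow_pos (by norm_num : (0:ℕ) < 2) i)
      (by rw [hk, pow_succ]; ring)
  simp [h2, Nat.mul_mod_right] at h

lemma le_mu_of_testBit {n i : ℕ} (h : n.testBit i = true) : i ≤ mu n := by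
  have h1 : 2 ^ i ≤ n := Nat.ge_two_pow_of_testBit h
  exact (Nat.le_log_iff_pow_le (by norm_num)
    (Nat.lt_of_lt_of_le (pow_pos (by norm_num : (0:ℕ) < 2) i) h1).ne').mpr h1

lemma testBit_mu {n : ℕ} (hn : 0 < n) : n.testBit (mu n) = true := by
  have hp : 0 < 2 ^ mu n := pow_pos (by norm_num : (0:ℕ) < 2) _
  have h1 : 2 ^ mu n ≤ n := Nat.pow_log_le_self 2 hn.ne'
  have h2 : n < 2 ^ (mu n + 1) := Nat.lt_pow_succ_log_self (by norm_num) n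
  have hlo : 1 ≤ n / 2 ^ mu n := (Nat.one_le_div_iff hp).mpr h1
  have hhi : n / 2 ^ mu n < 2 := (Nat.div_lt_iff_lt_mul hp).mpr (by rw [pow_succ] at h2; omega)
  have hd : n / 2 ^ mu n = 1 := by omega
  rw [Nat.testBit_eq_decide_div_mod_eq, hd]
  rfl

lemma testBit_lam {n : ℕ} (hn : 0 < n) : n.testBit (lam n) = true := by
  obtain ⟨q, hq⟩ := pow_padicValNat_dvd (p := 2) (n := n)
  have hq' : n = 2 ^ lam n * q := hq
  have key : ∀ L q : ℕ, n = 2 ^ L * q → q % 2 = 0 → 2 ^ (L + 1) ∣ n := by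
    intro L q h hq0
    obtain ⟨r, hr⟩ := Nat.dvd_of_mod_eq_zero hq0
    exact ⟨r, by rw [h, hr, pow_succ]; ring⟩
  have hp : 0 < 2 ^ lam n := pow_pos (by norm_num : (0:ℕ) < 2) _
  have hodd : q % 2 = 1 := by
    rcases Nat.mod_two_eq_zero_or_one q with h | h
    · exact absurd (key (lam n) q hq' h) (pow_succ_padicValNat_not_dvd (p := 2) hn.ne')
    · exact h
  have hd : n / 2 ^ lam n = q :=
    Nat.div_eq_of_eq_mul_left hp (by rw [mul_comm] at hq'; exact hq')
  rw [Nat.testBit_eq_decide_div_mod_eq, hd, hodd]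
  rfl

lemma testBit_add_of_mu_lt_lam {m n : ℕ} (h1 : mu m < lam n) (i : ℕ) :
    (m + n).testBit i = (m.testBit i || n.testBit i) := by
  obtain ⟨q, hq⟩ := pow_padicValNat_dvd (p := 2) (n := n)
  have hq' : n = 2 ^ lam n * q := hq
  obtain ⟨L, hL⟩ : ∃ L, lam n = L := ⟨_, rfl⟩
  rw [hL] at hq' h1
  have hmlt : m < 2 ^ L := lt_of_lt_of_le (Nat.lt_pow_succ_log_self (by norm_num) m)
    (Nat.pow_le_pow_right (by norm_num) h1)
  have hsum : m + n = 2 ^ L * q + m := by rw [hq']; ring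
  have hn' : n = 2 ^ L * q + 0 := by rw [hq']; ring
  rw [hsum, Nat.testBit_two_pow_mul_add q hmlt i]
  conv_rhs => rw [hn']
  rw [Nat.testBit_two_pow_mul_add q (pow_pos (by norm_num : (0:ℕ) < 2) _) i]
  by_cases hi : i < L
  · simp [hi, Nat.zero_testBit]
  · simp only [if_neg hi]
    have : m.testBit i = false := Nat.testBit_lt_two_pow
      (lt_of_lt_of_le hmlt (Nat.pow_le_pow_right (by norm_num) (by omega)))
    simp [this]

theorem vsg_of_sum (K : Set ℕ) (Kapp : ℕ → Set ℕ)
    (hmono : ∀ s, Kapp s ⊆ Kapp (s + 1)) (hK : K = ⋃ s, Kapp s)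
    (m n : ℕ) (hm : 0 < m) (hn : 0 < n)
    (h1 : mu m < lam n)
    (h2 : ∀ x ≤ mu m, (x ∈ K ↔ x ∈ Kapp (lam n)))
    (h3 : mu (m + n) = mu n) :
    VSG Kapp (m + n) = SG K Kapp m + VSG Kapp n := by
  have kmono : ∀ {a b : ℕ}, a ≤ b → Kapp a ⊆ Kapp b := by
    intro a b hab
    induction hab with
    | refl => exact subset_rfl
    | step h ih => exact ih.trans (hmono _)
  have hsub : ∀ s x, x ∈ Kapp s → x ∈ K := by
    intro s x hx
    rw [hK]
    exact Set.mem_iUnion.mpr ⟨s, hx⟩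
  have hlammu : lam n ≤ mu n := le_mu_of_testBit (testBit_lam hn)
  have hbit : ∀ i, (m + n).testBit i = (m.testBit i || n.testBit i) :=
    testBit_add_of_mu_lt_lam h1
  have hmfalse : ∀ i, mu m < i → m.testBit i = false := by
    intro i hi
    cases hmt : m.testBit i with
    | false => rfl
    | true => exact absurd (le_mu_of_testBit hmt) (by omega)
  have hnfalse : ∀ i, i < lam n → n.testBit i = false := by
    intro i hi
    cases hnt : n.testBit i with
    | false => rfl
    | true => exact absurd (lam_le_of_testBit hnt) (by omega)
  have hset : {p : ℕ × ℕ | VeryShortGap Kapp (m + n) p} =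
      {p : ℕ × ℕ | ShortGap K Kapp m p} ∪ {p : ℕ × ℕ | VeryShortGap Kapp n p} := by
    ext p
    simp only [Set.mem_setOf_eq, Set.mem_union]
    constructor
    · rintro ⟨⟨hb1, hb2, hlt, hbet⟩, x, hx, hxK, hxN⟩
      rw [h3] at hxK
      by_cases hc : p.2 ≤ mu m
      · left
        have hm2 : m.testBit p.2 = true := by
          have h' : ((m + n).testBit p.2) = true := hb2
          rw [hbit p.2, hnfalse p.2 (by omega)] at h'
          simpa using h'
        have hm1 : m.testBit p.1 = true := by
          have h' : ((m + n).testBit p.1) = true := hb1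
          rw [hbit p.1, hnfalse p.1 (by omega)] at h'
          simpa using h'
        refine ⟨⟨hm1, hm2, hlt, ?_⟩, x, hx, hsub _ x hxK, hxN⟩
        intro t ht1 ht2 hmt
        exact hbet t ht1 ht2 (by rw [hbit t]; simp [hmt])
      · push_neg at hc
        have hm2 : m.testBit p.2 = false := hmfalse p.2 hc
        have hn2 : n.testBit p.2 = true := by
          have h' : ((m + n).testBit p.2) = true := hb2
          rw [hbit p.2, hm2] at h'
          simpa using h'
        by_cases hc1 : lam n ≤ p.1
        · right
          have hm1 : m.testBit p.1 = false := hmfalse p.1 (by omega)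
          have hn1 : n.testBit p.1 = true := by
            have h' : ((m + n).testBit p.1) = true := hb1
            rw [hbit p.1, hm1] at h'
            simpa using h'
          refine ⟨⟨hn1, hn2, hlt, ?_⟩, x, hx, hxK, hxN⟩
          intro t ht1 ht2 hnt
          exact hbet t ht1 ht2 (by rw [hbit t]; simp [hnt])
        · exfalso
          push_neg at hc1
          have hn1 : n.testBit p.1 = false := hnfalse p.1 hc1
          have hm1 : m.testBit p.1 = true := by
            have h' : ((m + n).testBit p.1) = true := hb1
            rw [hbit p.1, hn1] at h'
            simpa using h'
          have hp1 : p.1 ≤ mu m := le_mu_of_testBit hm1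
          have hLn : lam n ≤ p.2 := lam_le_of_testBit hn2
          have hp1' : p.1 = mu m := by
            by_contra hne
            exact hbet (mu m) (by omega) (by omega)
              (by rw [hbit (mu m)]; simp [testBit_mu hm])
          have hp2 : p.2 = lam n := by
            by_contra hne
            exact hbet (lam n) (by omega) (by omega)
              (by rw [hbit (lam n)]; simp [testBit_lam hn])
          apply hxN
          rw [hp2]
          exact (h2 x (by omega)).mp (hsub _ x hxK)
    · rintro (⟨⟨hb1, hb2, hlt, hbet⟩, x, hx, hxK, hxN⟩ | ⟨⟨hb1, hb2, hlt, hbet⟩, x, hx, hxK, hxN⟩)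
      · have hp2 : p.2 ≤ mu m := le_mu_of_testBit hb2
        have hp1 : p.1 ≤ mu m := le_mu_of_testBit hb1
        refine ⟨⟨?_, ?_, hlt, ?_⟩, x, hx, ?_, hxN⟩
        · show ((m + n).testBit p.1) = true
          rw [hbit p.1]
          simp [hb1]
        · show ((m + n).testBit p.2) = true
          rw [hbit p.2]
          simp [hb2]
        · intro t ht1 ht2 ht
          have ht' : ((m + n).testBit t) = true := ht
          rw [hbit t, hnfalse t (by omega)] at ht'
          exact hbet t ht1 ht2 (by simpa using ht')
        · rw [h3]
          exact kmono hlammu ((h2 x (by omega)).mp hxK)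
      · have hp1 : lam n ≤ p.1 := lam_le_of_testBit hb1
        refine ⟨⟨?_, ?_, hlt, ?_⟩, x, hx, ?_, hxN⟩
        · show ((m + n).testBit p.1) = true
          rw [hbit p.1]
          simp [hb1]
        · show ((m + n).testBit p.2) = true
          rw [hbit p.2]
          simp [hb2]
        · intro t ht1 ht2 ht
          have ht' : ((m + n).testBit t) = true := ht
          rw [hbit t, hmfalse t (by omega)] at ht'
          exact hbet t ht1 ht2 (by simpa using ht')
        · rw [h3]
          exact hxK
  have hfin1 : {p : ℕ × ℕ | ShortGap K Kapp m p}.Finite := by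
    apply Set.Finite.subset (Set.finite_Iic (mu m, mu m))
    rintro ⟨a, b⟩ ⟨⟨ha, hb, -, -⟩, -⟩
    simp only [Set.mem_Iic, Prod.mk_le_mk]
    exact ⟨le_mu_of_testBit ha, le_mu_of_testBit hb⟩
  have hfin2 : {p : ℕ × ℕ | VeryShortGap Kapp n p}.Finite := by
    apply Set.Finite.subset (Set.finite_Iic (mu n, mu n))
    rintro ⟨a, b⟩ ⟨⟨ha, hb, -, -⟩, -⟩
    simp only [Set.mem_Iic, Prod.mk_le_mk]
    exact ⟨le_mu_of_testBit ha, le_mu_of_testBit hb⟩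
  have hdisj : Disjoint {p : ℕ × ℕ | ShortGap K Kapp m p}
      {p : ℕ × ℕ | VeryShortGap Kapp n p} := by
    rw [Set.disjoint_left]
    rintro p ⟨⟨ha, -, -, -⟩, -⟩ ⟨⟨hb, -, -, -⟩, -⟩
    have ha' : p.1 ≤ mu m := le_mu_of_testBit ha
    have hb' : lam n ≤ p.1 := lam_le_of_testBit hb
    omega
  unfold VSG SG
  rw [hset, Set.ncard_union_eq hdisj hfin1 hfin2]
end

section
/- Let K ⊆ ℕ and let K[·] be an approximation of K (K[s] ⊆ K[s+1] for all s and K = ⋃_s K[s]). Let m, n be positive integers such that: (1) μ(m) < λ(n); (2) for all x ≤ μ(m), x ∈ K if and only if x ∈ K[λ(n)]; (3) μ(m+n) = μ(n). Then a gap of m is very short in m + n if and only if it is short in m. -/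
/-!
Since `mu m < lam n`, adding `n` does not touch the binary digits of `m`, so every gap of `m` is a
gap of `m + n` with the same endpoints. A witness `x ≤ p.1 ≤ mu m` of a short gap lies in `K`, hence
by hypothesis in `Kapp (lam n) ⊆ Kapp (mu n) = Kapp (mu (m + n))`; conversely every element of
`Kapp (mu (m + n))` lies in `K`.
-/

lemma testBit_le_mu {m t : ℕ} (h : m.testBit t = true) : t ≤ mu m :=
  Nat.le_log_of_pow_le one_lt_two (Nat.ge_two_pow_of_testBit h)

lemma lam_le_mu (n : ℕ) : lam n ≤ mu n := by
  rcases Nat.eq_zero_or_pos n with rfl | hn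
  · simp [lam, mu]
  · exact Nat.le_log_of_pow_le one_lt_two (Nat.le_of_dvd hn pow_padicValNat_dvd)

lemma le_mu_of_mem_gaps {m : ℕ} {p : ℕ × ℕ} (hp : p ∈ gaps m) : p.1 < p.2 ∧ p.2 ≤ mu m :=
  ⟨hp.2.2.1, testBit_le_mu hp.2.1⟩

lemma testBit_add_of_two_pow_dvd {k m n t : ℕ} (hn : 2 ^ k ∣ n) (ht : t < k) :
    (m + n).testBit t = m.testBit t := by
  have hmod : (m + n) % 2 ^ k = m % 2 ^ k := by
    rw [Nat.add_mod, Nat.mod_eq_zero_of_dvd hn, Nat.add_zero, Nat.mod_mod]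
  have key := Nat.testBit_mod_two_pow (m + n) k t
  rw [hmod, Nat.testBit_mod_two_pow] at key
  simpa [ht] using key.symm

lemma testBit_add_of_le_mu {m n t : ℕ} (h : mu m < lam n) (ht : t ≤ mu m) :
    (m + n).testBit t = m.testBit t :=
  testBit_add_of_two_pow_dvd pow_padicValNat_dvd (ht.trans_lt h)

lemma gaps_subset_gaps_add {m n : ℕ} (h : mu m < lam n) : gaps m ⊆ gaps (m + n) := by
  intro p hp
  obtain ⟨hlt, hp2⟩ := le_mu_of_mem_gaps hp
  obtain ⟨hb1, hb2, -, hbetween⟩ := hp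
  refine ⟨?_, ?_, hlt, fun t ht1 ht2 => ?_⟩
  · rwa [testBit_add_of_le_mu h (hlt.le.trans hp2)]
  · rwa [testBit_add_of_le_mu h hp2]
  · rw [testBit_add_of_le_mu h (ht2.le.trans hp2)]
    exact hbetween t ht1 ht2

theorem very_short_gap_of_left_summand_general (K : Set ℕ) (Kapp : ℕ → Set ℕ)
    (hmono : ∀ s, Kapp s ⊆ Kapp (s + 1)) (hK : K = ⋃ s, Kapp s)
    (m n : ℕ)
    (h1 : mu m < lam n)
    (h2 : ∀ x ≤ mu m, (x ∈ K ↔ x ∈ Kapp (lam n)))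
    (h3 : mu (m + n) = mu n) :
    ∀ p ∈ gaps m, (VeryShortGap Kapp (m + n) p ↔ ShortGap K Kapp m p) := by
  intro p hp
  constructor
  · rintro ⟨-, x, hxp, hxK, hx⟩
    exact ⟨hp, x, hxp, hK ▸ Set.mem_iUnion_of_mem _ hxK, hx⟩
  · rintro ⟨-, x, hxp, hxK, hx⟩
    obtain ⟨hlt, hp2⟩ := le_mu_of_mem_gaps hp
    have hx_lam : x ∈ Kapp (lam n) := (h2 x (hxp.trans (hlt.le.trans hp2))).mp hxK
    refine ⟨gaps_subset_gaps_add h1 hp, x, hxp, ?_, hx⟩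
    rw [h3]
    exact monotone_nat_of_le_succ hmono (lam_le_mu n) hx_lam

theorem very_short_gap_of_left_summand (K : Set ℕ) (Kapp : ℕ → Set ℕ)
    (hmono : ∀ s, Kapp s ⊆ Kapp (s + 1)) (hK : K = ⋃ s, Kapp s)
    (m n : ℕ) (hm : 0 < m) (hn : 0 < n)
    (h1 : mu m < lam n)
    (h2 : ∀ x ≤ mu m, (x ∈ K ↔ x ∈ Kapp (lam n)))
    (h3 : mu (m + n) = mu n) :
    ∀ p ∈ gaps m, (VeryShortGap Kapp (m + n) p ↔ ShortGap K Kapp m p) :=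
  very_short_gap_of_left_summand_general K Kapp hmono hK m n h1 h2 h3
end

section
/- Fix a positive integer a. Suppose that for every coloring c : ℕ → Fin 2 there exists an infinite apart set H ⊆ ℕ such that FS^{{a, 2a}}(H) is monochromatic under c. Then for every coloring c : ℕ → Fin 2 there exists an infinite set H' ⊆ ℕ of positive integers such that FS^{≤2}(H') (all elements of H' and all sums of two distinct elements of H') is monochromatic under c. -/
/-!
Enumerate the infinite set `H` increasingly as `h₀ < h₁ < ⋯`, cut it into consecutive blocks of
`a` elements and let `s i` be the sum of the `i`-th block. A single `s i` is a sum of `a` distinct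
elements of `H` and a sum `s i + s j` with `i ≠ j` is a sum of `2a` distinct elements, so
`FS^{≤2}({s i})` lies inside the monochromatic set `FS^{{a, 2a}}(H)`. Since every element of a block
exceeds every element of the previous one, the block sums are strictly increasing.
-/

open Finset

lemma MonoChr.subset {r : ℕ} {c : ℕ → Fin r} {S T : Set ℕ} (hT : MonoChr c T) (hST : S ⊆ T) :
    MonoChr c S :=
  fun x hx y hy => hT x (hST hx) y (hST hy)

lemma mem_FSin {A B : Set ℕ} {x : ℕ} : x ∈ FSin A B ↔ ∃ j ∈ A, x ∈ FSeq j B := by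
  simp [FSin]

lemma mem_FSeq_one {B : Set ℕ} {x : ℕ} : x ∈ FSeq 1 B ↔ x ∈ B := by
  simp [FSeq, Finset.card_eq_one]

lemma mem_FSeq_two {B : Set ℕ} {x : ℕ} :
    x ∈ FSeq 2 B ↔ ∃ y ∈ B, ∃ z ∈ B, y ≠ z ∧ y + z = x := by
  simp only [FSeq, Set.mem_ofPred_eq, Finset.card_eq_two]
  constructor
  · rintro ⟨F, hFB, ⟨y, z, hyz, rfl⟩, rfl⟩
    simp only [coe_insert, coe_singleton, Set.insert_subset_iff, Set.singleton_subset_iff] at hFB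
    exact ⟨y, hFB.1, z, hFB.2, hyz, (sum_pair (f := id) hyz).symm⟩
  · rintro ⟨y, hy, z, hz, hyz, rfl⟩
    refine ⟨{y, z}, ?_, ⟨y, z, hyz, rfl⟩, sum_pair hyz⟩
    simp [Set.insert_subset_iff, hy, hz]

section Blocks

variable (f : ℕ → ℕ) (a : ℕ)

def block (i : ℕ) : Finset ℕ := (range a).image fun k => f (a * i + k)

def blockSum (i : ℕ) : ℕ := ∑ k ∈ range a, f (a * i + k)

variable {f a}

lemma coe_block_subset_range (i : ℕ) : (block f a i : Set ℕ) ⊆ Set.range f := by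
  simp [block, Set.image_subset_iff, Set.preimage]

lemma card_block (hf : f.Injective) (i : ℕ) : (block f a i).card = a := by
  rw [block, card_image_of_injective _ fun _ _ h => add_left_cancel (hf h), card_range]

lemma sum_block (hf : f.Injective) (i : ℕ) : ∑ x ∈ block f a i, x = blockSum f a i :=
  sum_image fun _ _ _ _ h => add_left_cancel (hf h)

lemma lt_of_mem_block (hf : StrictMono f) {i j x y : ℕ} (hij : i < j)
    (hx : x ∈ block f a i) (hy : y ∈ block f a j) : x < y := by
  simp only [block, mem_image, mem_range] at hx hy
  obtain ⟨k, hk, rfl⟩ := hx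
  obtain ⟨l, -, rfl⟩ := hy
  apply hf
  calc a * i + k < a * i + a := by omega
    _ = a * (i + 1) := by ring
    _ ≤ a * j + l := le_add_right (Nat.mul_le_mul_left a hij)

lemma disjoint_block (hf : StrictMono f) {i j : ℕ} (hij : i ≠ j) :
    Disjoint (block f a i) (block f a j) := by
  refine disjoint_left.mpr fun x hxi hxj => ?_
  rcases hij.lt_or_gt with hlt | hlt
  · exact (lt_of_mem_block hf hlt hxi hxj).false
  · exact (lt_of_mem_block hf hlt hxj hxi).false

lemma blockSum_strictMono (hf : StrictMono f) (ha : 0 < a) : StrictMono (blockSum f a) := by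
  refine strictMono_nat_of_lt_succ fun i => sum_lt_sum_of_nonempty (nonempty_range_iff.mpr
    ha.ne') fun k _ => hf ?_
  rw [mul_add_one]
  omega

lemma blockSum_pos (hpos : ∀ n, 0 < f n) (ha : 0 < a) (i : ℕ) : 0 < blockSum f a i :=
  sum_pos (fun _ _ => hpos _) (nonempty_range_iff.mpr ha.ne')

lemma blockSum_mem_FSeq (hf : f.Injective) (i : ℕ) :
    blockSum f a i ∈ FSeq a (Set.range f) :=
  ⟨block f a i, coe_block_subset_range i, card_block hf i, sum_block hf i⟩

lemma blockSum_add_mem_FSeq (hf : StrictMono f) {i j : ℕ} (hij : i ≠ j) :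
    blockSum f a i + blockSum f a j ∈ FSeq (2 * a) (Set.range f) := by
  have hdisj : Disjoint (block f a i) (block f a j) := disjoint_block hf hij
  refine ⟨block f a i ∪ block f a j, ?_, ?_, ?_⟩
  · rw [coe_union]
    exact Set.union_subset (coe_block_subset_range i) (coe_block_subset_range j)
  · rw [card_union_of_disjoint hdisj, card_block hf.injective, card_block hf.injective, two_mul]
  · rw [sum_union hdisj, sum_block hf.injective, sum_block hf.injective]

lemma FSin_one_two_blockSum_subset (hf : StrictMono f) :
    FSin {1, 2} (Set.range (blockSum f a)) ⊆ FSin {a, 2 * a} (Set.range f) := by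
  intro x hx
  obtain ⟨j, hj, hx⟩ := mem_FSin.mp hx
  rcases hj with rfl | rfl
  · obtain ⟨i, rfl⟩ := mem_FSeq_one.mp hx
    exact mem_FSin.mpr ⟨a, Or.inl rfl, blockSum_mem_FSeq hf.injective i⟩
  · obtain ⟨_, ⟨i, rfl⟩, _, ⟨j, rfl⟩, hne, rfl⟩ := mem_FSeq_two.mp hx
    exact mem_FSin.mpr ⟨2 * a, Or.inr rfl, blockSum_add_mem_FSeq hf (ne_of_apply_ne _ hne)⟩

end Blocks

theorem ht_a_2a_implies_ht_le_two (a : ℕ) (ha : 0 < a)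
    (hyp : ∀ c : ℕ → Fin 2, ∃ H : Set ℕ, H.Infinite ∧ ApartSet H ∧
      MonoChr c (FSin {a, 2 * a} H)) :
    ∀ c : ℕ → Fin 2, ∃ H : Set ℕ, H.Infinite ∧ (∀ x ∈ H, 0 < x) ∧
      MonoChr c (FSin {1, 2} H) := by
  intro c
  obtain ⟨H, hHinf, hHapart, hHmono⟩ := hyp c
  set f := Nat.nth (· ∈ H)
  have hf : StrictMono f := Nat.nth_strictMono hHinf
  have hrange : Set.range f = H := Nat.range_nth_of_infinite hHinf
  have hfpos : ∀ n, 0 < f n := fun n => hHapart.1 _ (hrange ▸ Set.mem_range_self n)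
  refine ⟨Set.range (blockSum f a),
    Set.infinite_range_of_injective (blockSum_strictMono hf ha).injective, ?_, ?_⟩
  · rintro _ ⟨i, rfl⟩
    exact blockSum_pos hfpos ha i
  · exact hHmono.subset (hrange ▸ FSin_one_two_blockSum_subset hf)
end
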